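/- Let X → T be a family of curves, with local coordinates z_α on overlapping charts U_α, transition functions φ_{αβ} = z_α ∘ z_β^{-1}. Then on overlaps, for points p, q in U_α ∩ U_β, one has dz_α(q)/(z_α(p) − z_α(q)) = dz_β(q)/(z_β(p) − z_β(q)) − (1/2) Θ_{αβ}(q) modulo the ideal I_Δ of the diagonal, where Θ_{αβ} = (φ''_{αβ}/φ'_{αβ}) dz_β is the cocycle of the affine structure (projective connection cocycle). -/

import Mathlib

open Filter Topology

/- STATEMENT 8: For a coordinate change φ = φ_{αβ} = z_α ∘ z_β⁻¹ (a
holomorphic function with nonvanishing derivative), one has, modulo the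
ideal of the diagonal,
  dz_α(q)/(z_α(p) − z_α(q)) = dz_β(q)/(z_β(p) − z_β(q)) − ½ Θ_{αβ}(q),
where Θ_{αβ} = (φ''/φ') dz_β.  In a coordinate z_β centered near a, with
p ↦ x and q ↦ a, this says precisely that
  φ'(a)/(φ(x) − φ(a)) − 1/(x − a) + ½ φ''(a)/φ'(a)  → 0  as x → a. -/
theorem stmt8
    (φ : ℂ → ℂ) (a : ℂ)
    (hφ : AnalyticAt ℂ φ a)
    (hφ' : deriv φ a ≠ 0) :
    Tendsto
      (fun x : ℂ =>
        deriv φ a / (φ x - φ a) - 1 / (x - a)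
          + (1 / 2) * (deriv (deriv φ) a / deriv φ a))
      (𝓝[≠] a) (𝓝 0) := by
  obtain ⟨p, hp⟩ := hφ
  set g : ℂ → ℂ := dslope φ a with hg_def
  have hg : HasFPowerSeriesAt g p.fslope a := hp.has_fpower_series_dslope_fslope
  have hga : g a = deriv φ a := dslope_same φ a
  -- deriv g a = p.coeff 2
  have hg' : deriv g a = p.coeff 2 := by
    rw [hg.deriv]; exact FormalMultilinearSeries.coeff_fslope
  -- second derivative of φ = 2 * p.coeff 2
  have h2 : deriv (deriv φ) a = 2 * p.coeff 2 := by
    obtain ⟨r, hr⟩ := hp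
    have := hr.factorial_smul (1 : ℂ) 2
    have h2' : iteratedDeriv 2 φ a = (Nat.factorial 2) • p 2 (fun _ => (1:ℂ)) := by
      rw [iteratedDeriv_eq_iteratedFDeriv, ← this]
    rw [show deriv (deriv φ) = iteratedDeriv 2 φ by
        rw [iteratedDeriv_succ, iteratedDeriv_one]]
    simp only [FormalMultilinearSeries.coeff] at h2' ⊢
    rw [h2']
    simp [Nat.factorial]
  -- the auxiliary continuous function
  have hgg : HasFPowerSeriesAt (dslope g a) p.fslope.fslope a :=
    hg.has_fpower_series_dslope_fslope
  have hcont : ContinuousAt (fun x => -(dslope g a x) / g x + deriv g a / g a) a := by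
    refine ContinuousAt.add (ContinuousAt.div ?_ hg.continuousAt ?_) continuousAt_const
    · exact hgg.continuousAt.neg
    · rw [hga]; exact hφ'
  have hlim : Tendsto (fun x => -(dslope g a x) / g x + deriv g a / g a) (𝓝 a) (𝓝 0) := by
    have := hcont.tendsto
    rwa [show -(dslope g a a) / g a + deriv g a / g a = 0 by
      rw [dslope_same, hga]; field_simp; ring] at this
  -- eventual equality on punctured nhds
  have hne : ∀ᶠ x in 𝓝 a, g x ≠ 0 := by
    have : g a ≠ 0 := by rw [hga]; exact hφ'
    exact hg.continuousAt.eventually_ne this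
  refine Tendsto.congr' ?_ (hlim.mono_left nhdsWithin_le_nhds)
  filter_upwards [self_mem_nhdsWithin, eventually_nhdsWithin_of_eventually_nhds hne]
    with x hx hgx
  have hxa : x - a ≠ 0 := sub_ne_zero.mpr hx
  have hgx' : g x = (φ x - φ a) / (x - a) := by
    rw [hg_def, dslope_of_ne φ hx, slope_def_field]
  have hφx : φ x - φ a = (x - a) * g x := by
    rw [hgx']; field_simp
  have hds : dslope g a x = (g x - g a) / (x - a) := by
    rw [dslope_of_ne g hx, slope_def_field]
  rw [hφx, hds, ← hga, hg', h2]
  field_simp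
  ring
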